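/- On the sublevel set {H < 1/4} of the octupole potential U(q₁,q₂) = (q₁²+q₂²)/2 + (q₁⁴+q₂⁴)/4 - (3/2)q₁²q₂², trajectories remain bounded: if a solution of the Hamiltonian system has initial energy E < 1/4, then (q₁(t), q₂(t)) remains inside the bounded connected component of {U < E} containing the initial position, for all time t. In particular, the connected component of {(q₁,q₂) : U(q₁,q₂) < E} containing the origin is bounded for every E < 1/4. -/

import Mathlib

noncomputable def Uoct (q : ℝ × ℝ) : ℝ :=
  (q.1 ^ 2 + q.2 ^ 2) / 2 + (q.1 ^ 4 + q.2 ^ 4) / 4 - (3 / 2) * q.1 ^ 2 * q.2 ^ 2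

/-!
On either line `q₁² = 1/2` or `q₂² = 1/2` the potential is `1/4 + (q_j² - 1/2)²/4 ≥ 1/4`, so for
`E < 1/4` the sublevel set `{U < E}` misses the sup-norm sphere of radius `√(1/2)`. A connected
set that contains the origin and misses that sphere stays inside the ball, by the intermediate
value theorem applied to the norm.
-/

theorem IsPreconnected.lt_of_forall_ne {X α : Type*} [TopologicalSpace X] [LinearOrder α]
    [TopologicalSpace α] [OrderClosedTopology α] {C : Set X} {f : X → α} {c : α}
    (hC : IsPreconnected C) (hf : ContinuousOn f C) {x : X} (hx : x ∈ C) (hfx : f x < c)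
    (hne : ∀ z ∈ C, f z ≠ c) {y : X} (hy : y ∈ C) : f y < c := by
  by_contra! hcy
  obtain ⟨z, hz, hfz⟩ := hC.intermediate_value hx hy hf ⟨hfx.le, hcy⟩
  exact hne z hz hfz

lemma quarter_le_Uoct_of_sq_eq_half {q : ℝ × ℝ} (h : q.1 ^ 2 = 1 / 2 ∨ q.2 ^ 2 = 1 / 2) :
    1 / 4 ≤ Uoct q := by
  unfold Uoct
  rcases h with h | h
  · nlinarith [sq_nonneg (q.2 ^ 2 - 1 / 2)]
  · nlinarith [sq_nonneg (q.1 ^ 2 - 1 / 2)]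

lemma quarter_le_Uoct_of_norm_eq {q : ℝ × ℝ} (hq : ‖q‖ = √(1 / 2)) : 1 / 4 ≤ Uoct q := by
  have hsq : ∀ t : ℝ, |t| = √(1 / 2) → t ^ 2 = 1 / 2 := fun t ht => by
    rw [← sq_abs, ht, Real.sq_sqrt (by norm_num)]
  rw [Prod.norm_def, Real.norm_eq_abs, Real.norm_eq_abs] at hq
  apply quarter_le_Uoct_of_sq_eq_half
  rcases max_choice |q.1| |q.2| with h | h
  · exact Or.inl (hsq _ (h ▸ hq))
  · exact Or.inr (hsq _ (h ▸ hq))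

/-- For each E < 1/4, the connected component of the open sublevel set
{U < E} ⊂ ℝ² containing the origin is bounded. -/
theorem stmt_15 (E : ℝ) (hE : E < 1 / 4) :
    Bornology.IsBounded
      (connectedComponentIn {q : ℝ × ℝ | Uoct q < E} ((0 : ℝ), (0 : ℝ))) := by
  refine Metric.isBounded_ball (x := 0) (r := √(1 / 2)) |>.subset fun y hy => ?_
  have horigin : ((0 : ℝ), (0 : ℝ)) ∈ {q : ℝ × ℝ | Uoct q < E} :=
    connectedComponentIn_nonempty_iff.mp ⟨y, hy⟩
  rw [mem_ball_zero_iff]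
  refine isPreconnected_connectedComponentIn.lt_of_forall_ne continuous_norm.continuousOn
    (mem_connectedComponentIn horigin) (by simp) (fun z hz hnorm => ?_) hy
  have hzE : Uoct z < E := connectedComponentIn_subset {q : ℝ × ℝ | Uoct q < E} _ hz
  linarith [quarter_le_Uoct_of_norm_eq hnorm]
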